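/- Bounds on the Opinion-Dependent Reproduction Number: for every opinion vector o(t) ∈ [−0.5, 0.5]^n, one has R_min ≤ R^o_t ≤ R_max, where R^o_t = ρ(D(o(t))^{−1} B(o(t))), R_min = ρ(D^{−1} B_min), and R_max = ρ(D_min^{−1} B). -/

import Mathlib

open Matrix Filter Set

noncomputable section

/-- The modified sign function: `1` if `0 ≤ x`, `-1` otherwise. -/
def sgnm (x : ℝ) : ℝ := if 0 ≤ x then 1 else -1

/-- Gauge transformation matrix `Φ(o) = diag(sgnm o₁, …, sgnm oₙ)`. -/
def gaugeMat {n : ℕ} (o : Fin n → ℝ) : Matrix (Fin n) (Fin n) ℝ :=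
  Matrix.diagonal fun i => sgnm (o i)

/-- Graph Laplacian of a nonnegative adjacency matrix with zero diagonal. -/
def lapOf {n : ℕ} (A : Matrix (Fin n) (Fin n) ℝ) : Matrix (Fin n) (Fin n) ℝ :=
  Matrix.diagonal (fun i => ∑ j, A i j) - A

/-- Irreducibility of a (nonnegative) matrix: between any two indices some power
has a strictly positive entry. -/
def MatIrreducible {n : ℕ} (M : Matrix (Fin n) (Fin n) ℝ) : Prop :=
  ∀ i j : Fin n, ∃ k : ℕ, 1 ≤ k ∧ 0 < (M ^ k) i j

/-- Spectral radius of a real square matrix, as the largest modulus of a complex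
eigenvalue. -/
def specRad {m : Type*} [Fintype m] [DecidableEq m] (A : Matrix m m ℝ) : ℝ :=
  sSup ((fun z => ‖z‖) '' spectrum ℂ (A.map (algebraMap ℝ ℂ)))

/-- Spectral abscissa of a real square matrix, as the largest real part of a
complex eigenvalue. -/
def specAbs {m : Type*} [Fintype m] [DecidableEq m] (A : Matrix m m ℝ) : ℝ :=
  sSup (Complex.re '' spectrum ℂ (A.map (algebraMap ℝ ℂ)))

/-- A real square matrix is Hurwitz if all its (complex) eigenvalues have
negative real part. -/
def IsHurwitz {m : Type*} [Fintype m] [DecidableEq m] (A : Matrix m m ℝ) : Prop :=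
  ∀ z ∈ spectrum ℂ (A.map (algebraMap ℝ ℂ)), z.re < 0

/-- The data of the coupled networked SIS epidemic–opinion model over `n`
communities. -/
structure EpiOpModel (n : ℕ) where
  /-- healing rates -/
  δ : Fin n → ℝ
  /-- minimum healing rate -/
  δmin : ℝ
  /-- minimum infection rate -/
  βmin : ℝ
  /-- unweighted adjacency matrix `Ã` of the (strongly connected) epidemic graph -/
  Atil : Matrix (Fin n) (Fin n) ℝ
  /-- infection matrix `B = [β_ij]` -/
  B : Matrix (Fin n) (Fin n) ℝ
  /-- nonnegative adjacency matrix `Ā_u` of the (strongly connected) opinion graph -/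
  Au : Matrix (Fin n) (Fin n) ℝ
  δmin_pos : 0 < δmin
  δ_ge : ∀ i, δmin ≤ δ i
  βmin_pos : 0 < βmin
  Atil_01 : ∀ i j, Atil i j = 0 ∨ Atil i j = 1
  Atil_diag : ∀ i, Atil i i = 0
  B_edge : ∀ i j, Atil i j = 1 → βmin ≤ B i j
  B_off : ∀ i j, Atil i j = 0 → B i j = 0
  B_irred : MatIrreducible B
  Au_nonneg : ∀ i j, 0 ≤ Au i j
  Au_diag : ∀ i, Au i i = 0
  Au_irred : MatIrreducible Au

namespace EpiOpModel

/-- The state space `[0,1]^n × [−0.5, 0.5]^n`. -/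
def InBox {n : ℕ} (_M : EpiOpModel n) (x o : Fin n → ℝ) : Prop :=
  (∀ i, x i ∈ Set.Icc (0:ℝ) 1) ∧ (∀ i, o i ∈ Set.Icc (-(1/2) : ℝ) (1/2))

variable {n : ℕ} (M : EpiOpModel n)

/-- `B_min = β_min Ã`. -/
def Bmin : Matrix (Fin n) (Fin n) ℝ := M.βmin • M.Atil

/-- `D = diag(δ₁, …, δₙ)`. -/
def Dmax : Matrix (Fin n) (Fin n) ℝ := Matrix.diagonal M.δ

/-- `D_min = δ_min I`. -/
def Dmin : Matrix (Fin n) (Fin n) ℝ := M.δmin • (1 : Matrix (Fin n) (Fin n) ℝ)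

/-- Opinion-dependent healing matrix `D(o) = D_min + (D − D_min)(O + 0.5 I)`. -/
def Dmat (o : Fin n → ℝ) : Matrix (Fin n) (Fin n) ℝ :=
  Matrix.diagonal fun i => M.δmin + (M.δ i - M.δmin) * (o i + 1/2)

/-- Opinion-dependent infection matrix `B(o) = B − (O + 0.5 I)(B − B_min)`. -/
def Bmat (o : Fin n → ℝ) : Matrix (Fin n) (Fin n) ℝ :=
  Matrix.of fun i j => M.B i j - (o i + 1/2) * (M.B i j - M.Bmin i j)

/-- Laplacian `L̄_u` of the opinion adjacency matrix. -/
def Lu : Matrix (Fin n) (Fin n) ℝ := lapOf M.Au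

/-- Signed opinion Laplacian `Φ(o) L̄_u Φ(o)`. -/
def Lsgn (o : Fin n → ℝ) : Matrix (Fin n) (Fin n) ℝ :=
  gaugeMat o * M.Lu * gaugeMat o

/-- Epidemic vector field `ẋ = −D(o)x + (I − X)B(o)x`. -/
def fx (x o : Fin n → ℝ) : Fin n → ℝ :=
  -(M.Dmat o).mulVec x +
    (Matrix.diagonal fun i => 1 - x i).mulVec ((M.Bmat o).mulVec x)

/-- Opinion vector field `ȯ = x − (Φ(o) L̄_u Φ(o) + I) o − 0.5 e`. -/
def fo (x o : Fin n → ℝ) : Fin n → ℝ :=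
  x - (M.Lsgn o + 1).mulVec o - (fun _ => (1/2 : ℝ))

/-- Equilibria of the coupled system. -/
def IsEquilibrium (x o : Fin n → ℝ) : Prop := M.fx x o = 0 ∧ M.fo x o = 0

/-- Trajectories (solutions) of the coupled system. -/
def IsTrajectory (x o : ℝ → Fin n → ℝ) : Prop :=
  ∀ t : ℝ, ∀ i : Fin n,
    HasDerivAt (fun s => x s i) (M.fx (x t) (o t) i) t ∧
    HasDerivAt (fun s => o s i) (M.fo (x t) (o t) i) t

/-- The Opinion-Dependent Reproduction Number `R^o = ρ(D(o)⁻¹ B(o))`. -/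
def Rnum (o : Fin n → ℝ) : ℝ := specRad ((M.Dmat o)⁻¹ * M.Bmat o)

/-- `R_max = ρ(D_min⁻¹ B)`. -/
def Rmax : ℝ := specRad (M.Dmin⁻¹ * M.B)

/-- `R_min = ρ(D⁻¹ B_min)`. -/
def Rmin : ℝ := specRad (M.Dmax⁻¹ * M.Bmin)

/-- `W(o) = −D(o) + B(o)`. -/
def Wmat (o : Fin n → ℝ) : Matrix (Fin n) (Fin n) ℝ := -(M.Dmat o) + M.Bmat o

/-- Jacobian matrix of the coupled system evaluated at a healthy equilibrium
`(0, o)`: block lower triangular with diagonal blocks `W(o)` and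
`−(Φ(o) L̄_u Φ(o) + I)`. -/
def JacHealthy (o : Fin n → ℝ) : Matrix (Fin n ⊕ Fin n) (Fin n ⊕ Fin n) ℝ :=
  Matrix.fromBlocks (M.Wmat o) 0 1 (-(M.Lsgn o + 1))

/-- Lyapunov stability of an equilibrium of the coupled system. -/
def LyapunovStable (xe oe : Fin n → ℝ) : Prop :=
  ∀ ε > 0, ∃ δ > 0, ∀ x o : ℝ → Fin n → ℝ, M.IsTrajectory x o →
    dist (x 0, o 0) (xe, oe) < δ → ∀ t ≥ 0, dist (x t, o t) (xe, oe) < ε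

/-- Local exponential stability of an equilibrium of the coupled system. -/
def LocExpStable (xe oe : Fin n → ℝ) : Prop :=
  ∃ δ > 0, ∃ C > 0, ∃ α > 0, ∀ x o : ℝ → Fin n → ℝ, M.IsTrajectory x o →
    dist (x 0, o 0) (xe, oe) < δ →
    ∀ t ≥ 0, dist (x t, o t) (xe, oe) ≤
      C * Real.exp (-α * t) * dist (x 0, o 0) (xe, oe)

end EpiOpModel

/-! Because `o i + 1/2 ∈ [0, 1]`, the entries of `D(o)` and `B(o)` interpolate between those of
`D_min, D` and `B_min, B`, so `0 ≤ D⁻¹ B_min ≤ D(o)⁻¹ B(o) ≤ D_min⁻¹ B` entrywise. The spectral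
radius is monotone for the entrywise order on nonnegative matrices: `0 ≤ A ≤ B` gives
`0 ≤ A ^ k ≤ B ^ k`, hence `‖A ^ k‖ ≤ ‖B ^ k‖` in the `ℓ∞` operator norm, and Gelfand's formula
`ρ(A) = lim ‖A ^ k‖ ^ (1 / k)` passes this to the limit. -/

open scoped ENNReal

lemma spectralRadius_le_of_nnnorm_pow_le {A : Type*} [NormedRing A] [NormedAlgebra ℂ A]
    [CompleteSpace A] {a b : A} (h : ∀ k : ℕ, ‖a ^ k‖₊ ≤ ‖b ^ k‖₊) :
    spectralRadius ℂ a ≤ spectralRadius ℂ b :=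
  le_of_tendsto_of_tendsto' (spectrum.pow_nnnorm_pow_one_div_tendsto_nhds_spectralRadius a)
    (spectrum.pow_nnnorm_pow_one_div_tendsto_nhds_spectralRadius b) fun k =>
      ENNReal.rpow_le_rpow (by exact_mod_cast h k) (by positivity)

namespace Matrix

variable {m n α : Type*} [Fintype m]

lemma pow_apply_le_pow_apply [DecidableEq m] [Semiring α] [PartialOrder α] [IsOrderedRing α]
    {A B : Matrix m m α} (hA : ∀ i j, 0 ≤ A i j) (hAB : ∀ i j, A i j ≤ B i j) (k : ℕ) :
    ∀ i j, (A ^ k) i j ≤ (B ^ k) i j := by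
  induction k with
  | zero => exact fun _ _ => le_rfl
  | succ k ih =>
    intro i j
    rw [pow_succ, pow_succ, mul_apply, mul_apply]
    exact Finset.sum_le_sum fun l _ => mul_le_mul (ih i l) (hAB l j) (hA l j)
      (pow_apply_nonneg (fun i j => (hA i j).trans (hAB i j)) k i l)

attribute [local instance] Matrix.linftyOpSeminormedAddCommGroup in
lemma linfty_opNNNorm_le_of_nnnorm_apply_le [Fintype n] [SeminormedAddCommGroup α]
    {A B : Matrix m n α} (h : ∀ i j, ‖A i j‖₊ ≤ ‖B i j‖₊) : ‖A‖₊ ≤ ‖B‖₊ := by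
  rw [linfty_opNNNorm_def, linfty_opNNNorm_def]
  exact Finset.sup_mono_fun fun i _ => Finset.sum_le_sum fun j _ => h i j

lemma diagonal_inv_mul_apply [DecidableEq m] [Field α] {d : m → α} (hd : ∀ i, d i ≠ 0)
    (A : Matrix m n α) (i : m) (j : n) : ((diagonal d)⁻¹ * A) i j = (d i)⁻¹ * A i j := by
  rw [inv_eq_left_inv (B := diagonal fun i => (d i)⁻¹), diagonal_mul]
  simp [diagonal_mul_diagonal, inv_mul_cancel₀ (hd _)]

end Matrix

section SpectralRadiusMono

variable {m : Type*} [Fintype m] [DecidableEq m]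

attribute [local instance] Matrix.linftyOpNormedRing Matrix.linftyOpNormedAlgebra

lemma specRad_nonneg (A : Matrix m m ℝ) : 0 ≤ specRad A :=
  Real.sSup_nonneg fun _ ⟨z, _, hz⟩ => hz ▸ norm_nonneg z

lemma spectralRadius_map_eq_ofReal_specRad (A : Matrix m m ℝ) :
    spectralRadius ℂ (A.map (algebraMap ℝ ℂ)) = ENNReal.ofReal (specRad A) := by
  set σ := spectrum ℂ (A.map (algebraMap ℝ ℂ)) with hσ_def
  have hfin : ((fun z : ℂ => ‖z‖) '' σ).Finite := (Matrix.finite_spectrum _).image _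
  apply le_antisymm
  · exact iSup₂_le fun z hz => (ofReal_norm z).ge.trans
      (ENNReal.ofReal_le_ofReal (le_csSup hfin.bddAbove ⟨z, hz, rfl⟩))
  · rcases σ.eq_empty_or_nonempty with hσ | hσ
    · rw [specRad, ← hσ_def, hσ, image_empty, Real.sSup_empty, ENNReal.ofReal_zero]
      exact zero_le
    · obtain ⟨z, hz, hmax⟩ := (hσ.image _).csSup_mem hfin
      rw [specRad, ← hσ_def, ← hmax, ofReal_norm]
      exact le_iSup₂ (f := fun k (_ : k ∈ σ) => (‖k‖₊ : ℝ≥0∞)) z hz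

theorem specRad_le_specRad_of_apply_le {A B : Matrix m m ℝ} (hA : ∀ i j, 0 ≤ A i j)
    (hAB : ∀ i j, A i j ≤ B i j) : specRad A ≤ specRad B := by
  have hnorm (k : ℕ) : ‖A.map (algebraMap ℝ ℂ) ^ k‖₊ ≤ ‖B.map (algebraMap ℝ ℂ) ^ k‖₊ := by
    rw [← Matrix.map_pow, ← Matrix.map_pow]
    refine Matrix.linfty_opNNNorm_le_of_nnnorm_apply_le fun i j => ?_
    have hAk := Matrix.pow_apply_nonneg hA k i j
    have hABk := Matrix.pow_apply_le_pow_apply hA hAB k i j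
    simp only [Matrix.map_apply, Complex.coe_algebraMap, Complex.nnnorm_real,
      Real.nnnorm_of_nonneg hAk, Real.nnnorm_of_nonneg (hAk.trans hABk)]
    exact_mod_cast hABk
  have h := spectralRadius_le_of_nnnorm_pow_le hnorm
  rwa [spectralRadius_map_eq_ofReal_specRad, spectralRadius_map_eq_ofReal_specRad,
    ENNReal.ofReal_le_ofReal_iff (specRad_nonneg B)] at h

theorem specRad_diagonal_inv_mul_le {d d' : m → ℝ} {A B : Matrix m m ℝ} (hd' : ∀ i, 0 < d' i)
    (hd : ∀ i, d' i ≤ d i) (hA : ∀ i j, 0 ≤ A i j) (hAB : ∀ i j, A i j ≤ B i j) :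
    specRad ((diagonal d)⁻¹ * A) ≤ specRad ((diagonal d')⁻¹ * B) := by
  have hd0 i : 0 < d i := (hd' i).trans_le (hd i)
  refine specRad_le_specRad_of_apply_le (fun i j => ?_) (fun i j => ?_) <;>
    rw [Matrix.diagonal_inv_mul_apply fun i => (hd0 i).ne']
  · exact mul_nonneg (inv_nonneg.2 (hd0 i).le) (hA i j)
  · rw [Matrix.diagonal_inv_mul_apply fun i => (hd' i).ne']
    exact mul_le_mul ((inv_le_inv₀ (hd0 i) (hd' i)).2 (hd i)) (hAB i j) (hA i j)
      (inv_nonneg.2 (hd' i).le)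

end SpectralRadiusMono

namespace EpiOpModel

variable {n : ℕ} (M : EpiOpModel n)

lemma Bmin_nonneg (i j : Fin n) : 0 ≤ M.Bmin i j := by
  rcases M.Atil_01 i j with h | h <;> simp [Bmin, h, M.βmin_pos.le]

lemma Bmin_le_B (i j : Fin n) : M.Bmin i j ≤ M.B i j := by
  rcases M.Atil_01 i j with h | h
  · simp [Bmin, h, M.B_off i j h]
  · simpa [Bmin, h] using M.B_edge i j h

lemma Bmat_apply_mem_Icc {o : Fin n → ℝ} {i : Fin n} (hoi : o i ∈ Icc (-(1/2) : ℝ) (1/2))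
    (j : Fin n) : M.Bmat o i j ∈ Icc (M.Bmin i j) (M.B i j) := by
  have hgap := sub_nonneg.2 (M.Bmin_le_B i j)
  simp only [Bmat, of_apply, mem_Icc] at hoi ⊢
  constructor <;> nlinarith

lemma healingRate_mem_Icc {o : Fin n → ℝ} {i : Fin n} (hoi : o i ∈ Icc (-(1/2) : ℝ) (1/2)) :
    M.δmin + (M.δ i - M.δmin) * (o i + 1/2) ∈ Icc M.δmin (M.δ i) := by
  have hgap := sub_nonneg.2 (M.δ_ge i)
  simp only [mem_Icc] at hoi ⊢
  constructor <;> nlinarith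

lemma Dmin_eq_diagonal : M.Dmin = Matrix.diagonal fun _ => M.δmin :=
  smul_one_eq_diagonal M.δmin

end EpiOpModel

/-- Proposition 1, part 2, bounds on the Opinion-Dependent
Reproduction Number: for every `o ∈ [−0.5, 0.5]^n`,
`R_min ≤ R^o ≤ R_max`, where `R_min = ρ(D⁻¹ B_min)` and
`R_max = ρ(D_min⁻¹ B)`. -/
theorem Rnum_bounds {n : ℕ} (M : EpiOpModel n) (o : Fin n → ℝ)
    (ho : ∀ i, o i ∈ Set.Icc (-(1/2) : ℝ) (1/2)) :
    M.Rmin ≤ M.Rnum o ∧ M.Rnum o ≤ M.Rmax := by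
  have hB i j := M.Bmat_apply_mem_Icc (ho i) j
  have hδ i := M.healingRate_mem_Icc (ho i)
  unfold EpiOpModel.Rmin EpiOpModel.Rnum EpiOpModel.Rmax EpiOpModel.Dmax EpiOpModel.Dmat
  rw [M.Dmin_eq_diagonal]
  constructor
  · exact specRad_diagonal_inv_mul_le (fun i => M.δmin_pos.trans_le (hδ i).1) (fun i => (hδ i).2)
      M.Bmin_nonneg fun i j => (hB i j).1
  · exact specRad_diagonal_inv_mul_le (fun _ => M.δmin_pos) (fun i => (hδ i).1)
      (fun i j => (M.Bmin_nonneg i j).trans (hB i j).1) fun i j => (hB i j).2
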